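/- Let W, Z_1, Z_2, Z_3, X, X' be random variables with finite ranges on a common finite probability space. Assume: (independence) I(W ; (Z_1, Z_2, Z_3)) = 0; (minimum key storage) H(Z_1) ≤ H(W); for the signal X serving qualified set {1, 2}: H(W | (X, Z_1)) = 0, H(W | (X, Z_2)) = 0, and I(W ; (X, Z_3)) = 0; and for the signal X' serving qualified set {1, 3}: H(W | (X', Z_1)) = 0 and I(W ; (X', Z_2)) = 0. Then H(X) ≥ 2 · H(W). -/

import Mathlib

open scoped BigOperators

/-- A finite probability space: a finite sample space `Ω` together with a
probability mass function `p`. -/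
structure FinProbSpace : Type 1 where
  Ω : Type
  fin : Fintype Ω
  p : Ω → ℝ
  nonneg : ∀ ω, 0 ≤ p ω
  sum_one : Finset.sum fin.elems p = 1

namespace FinProbSpace

/-- Probability that the random variable `X` takes the value `s`. -/
noncomputable def prob (μ : FinProbSpace) {S : Type} [DecidableEq S]
    (X : μ.Ω → S) (s : S) : ℝ :=
  letI := μ.fin
  ∑ ω : μ.Ω, if X ω = s then μ.p ω else 0

/-- Shannon entropy of a random variable with finite range. -/
noncomputable def H (μ : FinProbSpace) {S : Type} [Fintype S] [DecidableEq S]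
    (X : μ.Ω → S) : ℝ :=
  ∑ s : S, Real.negMulLog (μ.prob X s)

/-- Conditional Shannon entropy `H(X | Y)`. -/
noncomputable def Hc (μ : FinProbSpace) {S T : Type} [Fintype S] [DecidableEq S]
    [Fintype T] [DecidableEq T] (X : μ.Ω → S) (Y : μ.Ω → T) : ℝ :=
  μ.H (fun ω => (X ω, Y ω)) - μ.H Y

/-- Mutual information `I(X ; Y)`. -/
noncomputable def MI (μ : FinProbSpace) {S T : Type} [Fintype S] [DecidableEq S]
    [Fintype T] [DecidableEq T] (X : μ.Ω → S) (Y : μ.Ω → T) : ℝ :=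
  μ.H X + μ.H Y - μ.H (fun ω => (X ω, Y ω))

/-- Conditional mutual information `I(X ; Y | Z)`. -/
noncomputable def CMI (μ : FinProbSpace) {S T U : Type} [Fintype S] [DecidableEq S]
    [Fintype T] [DecidableEq T] [Fintype U] [DecidableEq U]
    (X : μ.Ω → S) (Y : μ.Ω → T) (Z : μ.Ω → U) : ℝ :=
  μ.H (fun ω => (X ω, Z ω)) + μ.H (fun ω => (Y ω, Z ω))
    - μ.H (fun ω => (X ω, Y ω, Z ω)) - μ.H Z

/-- Independence of two random variables: the joint pmf factorizes. -/
def IndepRV (μ : FinProbSpace) {S T : Type} [DecidableEq S] [DecidableEq T]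
    (X : μ.Ω → S) (Y : μ.Ω → T) : Prop :=
  ∀ s t, μ.prob (fun ω => (X ω, Y ω)) (s, t) = μ.prob X s * μ.prob Y t

end FinProbSpace

open FinProbSpace

/-! ### Auxiliary analytic lemmas -/

section Aux

/-- `x ↦ -x log x` is subadditive on nonnegative reals. -/
lemma negMulLog_add_le' {x y : ℝ} (hx : 0 ≤ x) (hy : 0 ≤ y) :
    Real.negMulLog (x + y) ≤ Real.negMulLog x + Real.negMulLog y := by
  rcases eq_or_lt_of_le hx with h | h
  · simp [← h]
  rcases eq_or_lt_of_le hy with h' | h'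
  · simp [← h']
  simp only [Real.negMulLog, neg_mul]
  have l1 : Real.log x ≤ Real.log (x + y) := Real.log_le_log h (by linarith)
  have l2 : Real.log y ≤ Real.log (x + y) := Real.log_le_log h' (by linarith)
  have m1 : x * Real.log x ≤ x * Real.log (x + y) := mul_le_mul_of_nonneg_left l1 (le_of_lt h)
  have m2 : y * Real.log y ≤ y * Real.log (x + y) := mul_le_mul_of_nonneg_left l2 (le_of_lt h')
  nlinarith [m1, m2]

lemma negMulLog_sum_le' {ι : Type*} (s : Finset ι) (g : ι → ℝ) (hg : ∀ i ∈ s, 0 ≤ g i) :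
    Real.negMulLog (∑ i ∈ s, g i) ≤ ∑ i ∈ s, Real.negMulLog (g i) := by
  induction s using Finset.cons_induction with
  | empty => simp
  | cons a s ha ih =>
    rw [Finset.sum_cons, Finset.sum_cons]
    have h1 : 0 ≤ g a := hg a (Finset.mem_cons_self _ _)
    have h2 : 0 ≤ ∑ i ∈ s, g i :=
      Finset.sum_nonneg fun i hi => hg i (Finset.mem_cons_of_mem hi)
    have h3 := ih fun i hi => hg i (Finset.mem_cons_of_mem hi)
    have h4 := negMulLog_add_le' h1 h2
    linarith

/-- Gibbs-type inequality. -/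
lemma gibbs_ineq {ι : Type*} [Fintype ι] (p q : ι → ℝ) (hp : ∀ i, 0 ≤ p i)
    (hq : ∀ i, 0 ≤ q i) (hsupp : ∀ i, p i ≠ 0 → 0 < q i)
    (hsum : ∑ i, q i ≤ ∑ i, p i) :
    ∑ i, p i * Real.log (q i) ≤ ∑ i, p i * Real.log (p i) := by
  have key : ∀ i, p i * Real.log (q i) - p i * Real.log (p i) ≤ q i - p i := by
    intro i
    rcases eq_or_lt_of_le (hp i) with h | h
    · simp [← h, hq i]
    · have hqi : 0 < q i := hsupp i (ne_of_gt h)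
      have hlog : Real.log (q i / p i) ≤ q i / p i - 1 :=
        Real.log_le_sub_one_of_pos (by positivity)
      rw [Real.log_div (ne_of_gt hqi) (ne_of_gt h)] at hlog
      have h2 := mul_le_mul_of_nonneg_left hlog (le_of_lt h)
      have h3 : p i * (q i / p i - 1) = q i - p i := by
        field_simp
      nlinarith [h2, h3]
  have hs := Finset.sum_le_sum fun i (_ : i ∈ Finset.univ) => key i
  rw [Finset.sum_sub_distrib, Finset.sum_sub_distrib] at hs
  linarith

/-- The purely combinatorial core of submodularity of entropy. -/
lemma sum_submod_core {S T U : Type} [Fintype S] [Fintype T] [Fintype U]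
    (q : S → T → U → ℝ) (hq : ∀ a b c, 0 ≤ q a b c) :
    (∑ a : S, ∑ b : T, ∑ c : U, Real.negMulLog (q a b c))
      + (∑ c : U, Real.negMulLog (∑ a : S, ∑ b : T, q a b c))
    ≤ (∑ a : S, ∑ c : U, Real.negMulLog (∑ b : T, q a b c))
      + (∑ b : T, ∑ c : U, Real.negMulLog (∑ a : S, q a b c)) := by
  classical
  have flat : ∀ (F : S → T → U → ℝ),
      (∑ x : S × T × U, F x.1 x.2.1 x.2.2) = ∑ a : S, ∑ b : T, ∑ c : U, F a b c := by
    intro F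
    rw [Fintype.sum_prod_type]
    exact Finset.sum_congr rfl fun a _ => Fintype.sum_prod_type _
  have reorder : ∀ (F : S → T → U → ℝ),
      (∑ a : S, ∑ b : T, ∑ c : U, F a b c) = ∑ c : U, ∑ a : S, ∑ b : T, F a b c := by
    intro F
    calc (∑ a : S, ∑ b : T, ∑ c : U, F a b c)
        = ∑ a : S, ∑ c : U, ∑ b : T, F a b c :=
          Finset.sum_congr rfl fun a _ => Finset.sum_comm
      _ = ∑ c : U, ∑ a : S, ∑ b : T, F a b c := Finset.sum_comm
  have hb0 : ∀ a c, 0 ≤ ∑ b : T, q a b c :=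
    fun a c => Finset.sum_nonneg fun b _ => hq a b c
  have ha0 : ∀ b c, 0 ≤ ∑ a : S, q a b c :=
    fun b c => Finset.sum_nonneg fun a _ => hq a b c
  have hc0 : ∀ c, 0 ≤ ∑ a : S, ∑ b : T, q a b c :=
    fun c => Finset.sum_nonneg fun a _ => hb0 a c
  have key := gibbs_ineq (fun x : S × T × U => q x.1 x.2.1 x.2.2)
      (fun x : S × T × U =>
        (∑ b : T, q x.1 b x.2.2) * (∑ a : S, q a x.2.1 x.2.2)
          / (∑ a : S, ∑ b : T, q a b x.2.2))
      (fun x => hq _ _ _)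
      (fun x => by
        have h1 := hb0 x.1 x.2.2
        have h2 := ha0 x.2.1 x.2.2
        have h3 := hc0 x.2.2
        positivity)
      (fun x hx => by
        have hp : 0 < q x.1 x.2.1 x.2.2 := lt_of_le_of_ne (hq _ _ _) (Ne.symm hx)
        have h1 : 0 < ∑ b : T, q x.1 b x.2.2 :=
          lt_of_lt_of_le hp (Finset.single_le_sum (fun b _ => hq x.1 b x.2.2)
            (Finset.mem_univ x.2.1))
        have h2 : 0 < ∑ a : S, q a x.2.1 x.2.2 :=
          lt_of_lt_of_le hp (Finset.single_le_sum (fun a _ => hq a x.2.1 x.2.2)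
            (Finset.mem_univ x.1))
        have h3 : 0 < ∑ a : S, ∑ b : T, q a b x.2.2 :=
          lt_of_lt_of_le h1 (Finset.single_le_sum (fun a _ => hb0 a x.2.2)
            (Finset.mem_univ x.1))
        exact div_pos (mul_pos h1 h2) h3)
      (by
        rw [flat (fun a b c => (∑ b' : T, q a b' c) * (∑ a' : S, q a' b c)
              / (∑ a' : S, ∑ b' : T, q a' b' c)),
            flat (fun a b c => q a b c),
            reorder (fun a b c => (∑ b' : T, q a b' c) * (∑ a' : S, q a' b c)
              / (∑ a' : S, ∑ b' : T, q a' b' c)),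
            reorder (fun a b c => q a b c)]
        refine Finset.sum_le_sum fun c _ => ?_
        have hfac : (∑ a : S, ∑ b : T, (∑ b' : T, q a b' c) * (∑ a' : S, q a' b c)
              / (∑ a' : S, ∑ b' : T, q a' b' c))
            = (∑ a : S, ∑ b' : T, q a b' c) * (∑ b : T, ∑ a' : S, q a' b c)
              / (∑ a' : S, ∑ b' : T, q a' b' c) := by
          rw [Finset.sum_mul, Finset.sum_div]
          refine Finset.sum_congr rfl fun a _ => ?_
          rw [Finset.mul_sum, Finset.sum_div]
        have hswap : (∑ b : T, ∑ a' : S, q a' b c) = ∑ a' : S, ∑ b' : T, q a' b' c :=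
          Finset.sum_comm
        rw [hfac, hswap]
        rcases eq_or_lt_of_le (hc0 c) with h | h
        · rw [← h]
          simp
        · rw [mul_div_assoc, div_self (ne_of_gt h), mul_one])
  rw [flat (fun a b c => q a b c * Real.log ((∑ b' : T, q a b' c) * (∑ a' : S, q a' b c)
        / (∑ a' : S, ∑ b' : T, q a' b' c))),
      flat (fun a b c => q a b c * Real.log (q a b c))] at key
  have elog : ∀ (a : S) (b : T) (c : U),
      q a b c * Real.log ((∑ b' : T, q a b' c) * (∑ a' : S, q a' b c)
        / (∑ a' : S, ∑ b' : T, q a' b' c))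
      = q a b c * Real.log (∑ b' : T, q a b' c) + q a b c * Real.log (∑ a' : S, q a' b c)
        - q a b c * Real.log (∑ a' : S, ∑ b' : T, q a' b' c) := by
    intro a b c
    rcases eq_or_lt_of_le (hq a b c) with h | h
    · rw [← h]; ring
    · have h1 : 0 < ∑ b' : T, q a b' c :=
        lt_of_lt_of_le h (Finset.single_le_sum (fun b' _ => hq a b' c) (Finset.mem_univ b))
      have h2 : 0 < ∑ a' : S, q a' b c :=
        lt_of_lt_of_le h (Finset.single_le_sum (fun a' _ => hq a' b c) (Finset.mem_univ a))
      have h3 : 0 < ∑ a' : S, ∑ b' : T, q a' b' c :=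
        lt_of_lt_of_le h1 (Finset.single_le_sum (fun a' _ => hb0 a' c) (Finset.mem_univ a))
      rw [Real.log_div (by positivity) (ne_of_gt h3), Real.log_mul (ne_of_gt h1) (ne_of_gt h2)]
      ring
  simp only [elog] at key
  simp only [Finset.sum_add_distrib, Finset.sum_sub_distrib] at key
  have eA : (∑ a : S, ∑ b : T, ∑ c : U, q a b c * Real.log (∑ b' : T, q a b' c))
      = ∑ a : S, ∑ c : U, (∑ b : T, q a b c) * Real.log (∑ b : T, q a b c) := by
    refine Finset.sum_congr rfl fun a _ => ?_
    rw [Finset.sum_comm]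
    exact Finset.sum_congr rfl fun c _ => (Finset.sum_mul _ _ _).symm
  have eB : (∑ a : S, ∑ b : T, ∑ c : U, q a b c * Real.log (∑ a' : S, q a' b c))
      = ∑ b : T, ∑ c : U, (∑ a : S, q a b c) * Real.log (∑ a : S, q a b c) := by
    rw [Finset.sum_comm]
    refine Finset.sum_congr rfl fun b _ => ?_
    rw [Finset.sum_comm]
    exact Finset.sum_congr rfl fun c _ => (Finset.sum_mul _ _ _).symm
  have eC : (∑ a : S, ∑ b : T, ∑ c : U, q a b c * Real.log (∑ a' : S, ∑ b' : T, q a' b' c))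
      = ∑ c : U, (∑ a : S, ∑ b : T, q a b c) * Real.log (∑ a : S, ∑ b : T, q a b c) := by
    rw [reorder (fun a b c => q a b c * Real.log (∑ a' : S, ∑ b' : T, q a' b' c))]
    refine Finset.sum_congr rfl fun c _ => ?_
    rw [Finset.sum_mul]
    exact Finset.sum_congr rfl fun a _ => (Finset.sum_mul _ _ _).symm
  rw [eA, eB, eC] at key
  simp only [Real.negMulLog_eq_neg, Finset.sum_neg_distrib]
  linarith

end Aux

namespace FinProbSpace

variable (μ : FinProbSpace)

lemma prob_nonneg {S : Type} [DecidableEq S] (X : μ.Ω → S) (s : S) :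
    0 ≤ μ.prob X s := by
  letI := μ.fin
  unfold prob
  refine Finset.sum_nonneg fun ω _ => ?_
  by_cases h : X ω = s <;> simp [h, μ.nonneg ω]

lemma sum_prob_pair {S T : Type} [DecidableEq S] [Fintype T] [DecidableEq T]
    (A : μ.Ω → S) (B : μ.Ω → T) (s : S) :
    ∑ t : T, μ.prob (fun ω => (A ω, B ω)) (s, t) = μ.prob A s := by
  classical
  letI := μ.fin
  unfold prob
  rw [Finset.sum_comm]
  refine Finset.sum_congr rfl fun ω _ => ?_
  by_cases h : A ω = s
  · have hstep : ∑ t : T, (if (A ω, B ω) = (s, t) then μ.p ω else 0)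
        = if (A ω, B ω) = (s, B ω) then μ.p ω else 0 := by
      refine Finset.sum_eq_single_of_mem (B ω) (Finset.mem_univ _) fun b _ hb => ?_
      rw [if_neg]
      simp only [Prod.mk.injEq, not_and]
      exact fun _ h2 => hb h2.symm
    rw [hstep, if_pos (by simp [h]), if_pos h]
  · rw [if_neg h]
    refine Finset.sum_eq_zero fun b _ => ?_
    rw [if_neg]
    simp only [Prod.mk.injEq, not_and]
    exact fun h1 => absurd h1 h

lemma prob_comp_inj {S T : Type} [DecidableEq S] [DecidableEq T]
    (X : μ.Ω → S) (e : S → T) (he : Function.Injective e) (s : S) :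
    μ.prob (fun ω => e (X ω)) (e s) = μ.prob X s := by
  letI := μ.fin
  unfold prob
  refine Finset.sum_congr rfl fun ω _ => ?_
  simp [he.eq_iff]

lemma prob_comp_fiber {S T : Type} [Fintype S] [DecidableEq S] [DecidableEq T]
    (X : μ.Ω → S) (f : S → T) (t : T) :
    μ.prob (fun ω => f (X ω)) t
      = ∑ s ∈ Finset.univ.filter (fun s => f s = t), μ.prob X s := by
  classical
  letI := μ.fin
  unfold prob
  rw [Finset.sum_comm]
  refine Finset.sum_congr rfl fun ω _ => ?_
  by_cases h : f (X ω) = t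
  · have hmem : X ω ∈ Finset.univ.filter (fun s => f s = t) :=
      Finset.mem_filter.mpr ⟨Finset.mem_univ _, h⟩
    have hstep : ∑ s ∈ Finset.univ.filter (fun s => f s = t),
        (if X ω = s then μ.p ω else 0) = if X ω = X ω then μ.p ω else 0 :=
      Finset.sum_eq_single_of_mem (X ω) hmem fun b _ hb => if_neg fun hh => hb hh.symm
    rw [hstep, if_pos rfl, if_pos h]
  · rw [if_neg h]
    symm
    apply Finset.sum_eq_zero
    intro s hs
    rw [if_neg]
    intro hh
    rw [← hh] at hs
    exact h (Finset.mem_filter.mp hs).2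

lemma H_comp_le {S T : Type} [Fintype S] [DecidableEq S] [Fintype T] [DecidableEq T]
    (f : S → T) (X : μ.Ω → S) :
    μ.H (fun ω => f (X ω)) ≤ μ.H X := by
  classical
  unfold H
  calc (∑ t : T, Real.negMulLog (μ.prob (fun ω => f (X ω)) t))
      = ∑ t : T, Real.negMulLog (∑ s ∈ Finset.univ.filter (fun s => f s = t), μ.prob X s) := by
        refine Finset.sum_congr rfl fun t _ => ?_
        rw [μ.prob_comp_fiber X f t]
    _ ≤ ∑ t : T, ∑ s ∈ Finset.univ.filter (fun s => f s = t), Real.negMulLog (μ.prob X s) :=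
        Finset.sum_le_sum fun t _ => negMulLog_sum_le' _ _ fun s _ => μ.prob_nonneg X s
    _ = ∑ s : S, Real.negMulLog (μ.prob X s) :=
        Finset.sum_fiberwise Finset.univ f (fun s => Real.negMulLog (μ.prob X s))

lemma H_congr {S T : Type} [Fintype S] [DecidableEq S] [Fintype T] [DecidableEq T]
    (X : μ.Ω → S) (Y : μ.Ω → T) (f : S → T) (g : T → S)
    (hf : ∀ ω, f (X ω) = Y ω) (hg : ∀ ω, g (Y ω) = X ω) : μ.H X = μ.H Y := by
  have h1 : μ.H Y ≤ μ.H X := by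
    have h := μ.H_comp_le f X
    rwa [show (fun ω => f (X ω)) = Y from funext hf] at h
  have h2 : μ.H X ≤ μ.H Y := by
    have h := μ.H_comp_le g Y
    rwa [show (fun ω => g (Y ω)) = X from funext hg] at h
  linarith

/-- Submodularity of Shannon entropy. -/
lemma H_submod {S T U : Type} [Fintype S] [DecidableEq S] [Fintype T] [DecidableEq T]
    [Fintype U] [DecidableEq U] (A : μ.Ω → S) (B : μ.Ω → T) (C : μ.Ω → U) :
    μ.H (fun ω => (A ω, B ω, C ω)) + μ.H C
      ≤ μ.H (fun ω => (A ω, C ω)) + μ.H (fun ω => (B ω, C ω)) := by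
  classical
  have hAC : ∀ (a : S) (c : U), μ.prob (fun ω => (A ω, C ω)) (a, c)
      = ∑ b : T, μ.prob (fun ω => (A ω, B ω, C ω)) (a, b, c) := by
    intro a c
    rw [← μ.sum_prob_pair (fun ω => (A ω, C ω)) B (a, c)]
    refine Finset.sum_congr rfl fun b _ => ?_
    exact (μ.prob_comp_inj (fun ω => ((A ω, C ω), B ω))
      (fun y => (y.1.1, y.2, y.1.2))
      (fun y z h => by
        obtain ⟨⟨y1, y2⟩, y3⟩ := y
        obtain ⟨⟨z1, z2⟩, z3⟩ := z
        simp_all [Prod.ext_iff]) ((a, c), b)).symm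
  have hBC : ∀ (b : T) (c : U), μ.prob (fun ω => (B ω, C ω)) (b, c)
      = ∑ a : S, μ.prob (fun ω => (A ω, B ω, C ω)) (a, b, c) := by
    intro b c
    rw [← μ.sum_prob_pair (fun ω => (B ω, C ω)) A (b, c)]
    refine Finset.sum_congr rfl fun a _ => ?_
    exact (μ.prob_comp_inj (fun ω => ((B ω, C ω), A ω))
      (fun y => (y.2, y.1.1, y.1.2))
      (fun y z h => by
        obtain ⟨⟨y1, y2⟩, y3⟩ := y
        obtain ⟨⟨z1, z2⟩, z3⟩ := z
        simp_all [Prod.ext_iff]) ((b, c), a)).symm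
  have hC : ∀ c : U, μ.prob C c
      = ∑ a : S, ∑ b : T, μ.prob (fun ω => (A ω, B ω, C ω)) (a, b, c) := by
    intro c
    rw [← μ.sum_prob_pair C (fun ω => (A ω, B ω)) c, Fintype.sum_prod_type]
    refine Finset.sum_congr rfl fun a _ => Finset.sum_congr rfl fun b _ => ?_
    exact (μ.prob_comp_inj (fun ω => (C ω, (A ω, B ω)))
      (fun y => (y.2.1, y.2.2, y.1))
      (fun y z h => by
        obtain ⟨y1, y2, y3⟩ := y
        obtain ⟨z1, z2, z3⟩ := z
        simp_all [Prod.ext_iff]) (c, (a, b))).symm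
  have eABC : μ.H (fun ω => (A ω, B ω, C ω))
      = ∑ a : S, ∑ b : T, ∑ c : U,
          Real.negMulLog (μ.prob (fun ω => (A ω, B ω, C ω)) (a, b, c)) := by
    unfold H
    rw [Fintype.sum_prod_type]
    exact Finset.sum_congr rfl fun a _ => Fintype.sum_prod_type _
  have eAC : μ.H (fun ω => (A ω, C ω))
      = ∑ a : S, ∑ c : U,
          Real.negMulLog (∑ b : T, μ.prob (fun ω => (A ω, B ω, C ω)) (a, b, c)) := by
    unfold H
    rw [Fintype.sum_prod_type]
    exact Finset.sum_congr rfl fun a _ => Finset.sum_congr rfl fun c _ => by rw [hAC]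
  have eBC : μ.H (fun ω => (B ω, C ω))
      = ∑ b : T, ∑ c : U,
          Real.negMulLog (∑ a : S, μ.prob (fun ω => (A ω, B ω, C ω)) (a, b, c)) := by
    unfold H
    rw [Fintype.sum_prod_type]
    exact Finset.sum_congr rfl fun b _ => Finset.sum_congr rfl fun c _ => by rw [hBC]
  have eC : μ.H C
      = ∑ c : U,
          Real.negMulLog (∑ a : S, ∑ b : T, μ.prob (fun ω => (A ω, B ω, C ω)) (a, b, c)) := by
    unfold H
    exact Finset.sum_congr rfl fun c _ => by rw [hC]
  rw [eABC, eAC, eBC, eC]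
  exact sum_submod_core (fun a b c => μ.prob (fun ω => (A ω, B ω, C ω)) (a, b, c))
    (fun a b c => μ.prob_nonneg _ _)

lemma H_unit : μ.H (fun _ : μ.Ω => ()) = 0 := by
  letI := μ.fin
  have hone : μ.prob (fun _ : μ.Ω => ()) () = 1 := by
    unfold prob
    simpa using (show Finset.sum Finset.univ μ.p = 1 from μ.sum_one)
  unfold H
  rw [Fintype.sum_unique]
  rw [hone]
  simp

/-- Subadditivity of Shannon entropy. -/
lemma H_subadd {S T : Type} [Fintype S] [DecidableEq S] [Fintype T] [DecidableEq T]
    (A : μ.Ω → S) (B : μ.Ω → T) :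
    μ.H (fun ω => (A ω, B ω)) ≤ μ.H A + μ.H B := by
  have h : μ.H (fun ω => (A ω, B ω, ())) + μ.H (fun _ : μ.Ω => ())
      ≤ μ.H (fun ω => (A ω, ())) + μ.H (fun ω => (B ω, ())) :=
    μ.H_submod A B (fun _ => ())
  have c1 : μ.H (fun ω => (A ω, B ω, ())) = μ.H (fun ω => (A ω, B ω)) :=
    μ.H_congr _ _ (fun p => (p.1, p.2.1)) (fun p => (p.1, p.2, ()))
      (fun _ => rfl) (fun _ => rfl)
  have c2 : μ.H (fun ω => (A ω, ())) = μ.H A :=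
    μ.H_congr _ _ (fun p => p.1) (fun a => (a, ())) (fun _ => rfl) (fun _ => rfl)
  have c3 : μ.H (fun ω => (B ω, ())) = μ.H B :=
    μ.H_congr _ _ (fun p => p.1) (fun b => (b, ())) (fun _ => rfl) (fun _ => rfl)
  have c4 : μ.H (fun _ : μ.Ω => ()) = 0 := μ.H_unit
  linarith

end FinProbSpace

/-- **Optimality (converse) part of Theorem 3 for N = 2**: at minimum key
storage (`H(Z_1) ≤ H(W)`), with independence, a signal `X` serving qualified
set `{1,2}` (correct for receivers 1, 2 and secure against 3) and a signal
`X'` serving `{1,3}` (correct for receiver 1 and secure against 2), the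
broadcast bandwidth satisfies `H(X) ≥ 2·H(W)`. -/
theorem min_key_storage_bandwidth_converse_N2
    (μ : FinProbSpace) {SW SZ1 SZ2 SZ3 SX SX' : Type}
    [Fintype SW] [DecidableEq SW] [Fintype SZ1] [DecidableEq SZ1]
    [Fintype SZ2] [DecidableEq SZ2] [Fintype SZ3] [DecidableEq SZ3]
    [Fintype SX] [DecidableEq SX] [Fintype SX'] [DecidableEq SX']
    (W : μ.Ω → SW) (Z1 : μ.Ω → SZ1) (Z2 : μ.Ω → SZ2) (Z3 : μ.Ω → SZ3)
    (X : μ.Ω → SX) (X' : μ.Ω → SX')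
    (hInd : μ.MI W (fun ω => (Z1 ω, Z2 ω, Z3 ω)) = 0)
    (hKey : μ.H Z1 ≤ μ.H W)
    (hCorr1 : μ.Hc W (fun ω => (X ω, Z1 ω)) = 0)
    (hCorr2 : μ.Hc W (fun ω => (X ω, Z2 ω)) = 0)
    (hSec3 : μ.MI W (fun ω => (X ω, Z3 ω)) = 0)
    (hCorr1' : μ.Hc W (fun ω => (X' ω, Z1 ω)) = 0)
    (hSec2' : μ.MI W (fun ω => (X' ω, Z2 ω)) = 0) :
    μ.H X ≥ 2 * μ.H W := by
  simp only [Hc, MI] at hInd hCorr1 hCorr2 hSec3 hCorr1' hSec2'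
  -- Step 1 : H(W,X) ≥ H W + H X
  have s1 : μ.H (fun ω => (W ω, Z3 ω, X ω)) + μ.H X
      ≤ μ.H (fun ω => (W ω, X ω)) + μ.H (fun ω => (Z3 ω, X ω)) :=
    μ.H_submod W Z3 X
  have c1 : μ.H (fun ω => (W ω, Z3 ω, X ω)) = μ.H (fun ω => (W ω, (X ω, Z3 ω))) :=
    μ.H_congr _ _ (fun p => (p.1, (p.2.2, p.2.1))) (fun p => (p.1, (p.2.2, p.2.1)))
      (fun _ => rfl) (fun _ => rfl)
  have c2 : μ.H (fun ω => (Z3 ω, X ω)) = μ.H (fun ω => (X ω, Z3 ω)) :=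
    μ.H_congr _ _ (fun p => (p.2, p.1)) (fun p => (p.2, p.1)) (fun _ => rfl) (fun _ => rfl)
  -- subadditivity facts
  have subB : μ.H (fun ω => (X ω, Z1 ω)) ≤ μ.H X + μ.H Z1 := μ.H_subadd X Z1
  have subC : μ.H (fun ω => (X ω, Z2 ω)) ≤ μ.H X + μ.H Z2 := μ.H_subadd X Z2
  -- Step 5 submodularity : I(Z1;Z2 | W,X) ≥ 0
  have s6 : μ.H (fun ω => (Z1 ω, Z2 ω, (W ω, X ω))) + μ.H (fun ω => (W ω, X ω))
      ≤ μ.H (fun ω => (Z1 ω, (W ω, X ω))) + μ.H (fun ω => (Z2 ω, (W ω, X ω))) :=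
    μ.H_submod Z1 Z2 (fun ω => (W ω, X ω))
  have c3 : μ.H (fun ω => (Z1 ω, (W ω, X ω))) = μ.H (fun ω => (W ω, (X ω, Z1 ω))) :=
    μ.H_congr _ _ (fun p => (p.2.1, (p.2.2, p.1))) (fun p => (p.2.2, (p.1, p.2.1)))
      (fun _ => rfl) (fun _ => rfl)
  have c4 : μ.H (fun ω => (Z2 ω, (W ω, X ω))) = μ.H (fun ω => (W ω, (X ω, Z2 ω))) :=
    μ.H_congr _ _ (fun p => (p.2.1, (p.2.2, p.1))) (fun p => (p.2.2, (p.1, p.2.1)))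
      (fun _ => rfl) (fun _ => rfl)
  -- monotonicity : H(W,(Z1,Z2)) ≤ H(Z1,Z2,(W,X))
  have m7 : μ.H (fun ω => (W ω, (Z1 ω, Z2 ω)))
      ≤ μ.H (fun ω => (Z1 ω, Z2 ω, (W ω, X ω))) :=
    μ.H_comp_le (fun p : SZ1 × SZ2 × (SW × SX) => (p.2.2.1, (p.1, p.2.1)))
      (fun ω => (Z1 ω, Z2 ω, (W ω, X ω)))
  -- Step 4' : independence gives H(W,(Z1,Z2)) ≥ H W + H(Z1,Z2)
  have s8 : μ.H (fun ω => (W ω, Z3 ω, (Z1 ω, Z2 ω))) + μ.H (fun ω => (Z1 ω, Z2 ω))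
      ≤ μ.H (fun ω => (W ω, (Z1 ω, Z2 ω))) + μ.H (fun ω => (Z3 ω, (Z1 ω, Z2 ω))) :=
    μ.H_submod W Z3 (fun ω => (Z1 ω, Z2 ω))
  have c5 : μ.H (fun ω => (W ω, Z3 ω, (Z1 ω, Z2 ω)))
      = μ.H (fun ω => (W ω, (Z1 ω, Z2 ω, Z3 ω))) :=
    μ.H_congr _ _ (fun p => (p.1, (p.2.2.1, (p.2.2.2, p.2.1))))
      (fun p => (p.1, (p.2.2.2, (p.2.1, p.2.2.1)))) (fun _ => rfl) (fun _ => rfl)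
  have c6 : μ.H (fun ω => (Z3 ω, (Z1 ω, Z2 ω))) = μ.H (fun ω => (Z1 ω, Z2 ω, Z3 ω)) :=
    μ.H_congr _ _ (fun p => (p.2.1, (p.2.2, p.1))) (fun p => (p.2.2, (p.1, p.2.1)))
      (fun _ => rfl) (fun _ => rfl)
  -- Step 4 : the second signal forces H(Z1,Z2) ≥ H W + H Z2
  have s9b : μ.H (fun ω => (W ω, Z2 ω, (X' ω, Z1 ω))) + μ.H (fun ω => (X' ω, Z1 ω))
      ≤ μ.H (fun ω => (W ω, (X' ω, Z1 ω))) + μ.H (fun ω => (Z2 ω, (X' ω, Z1 ω))) :=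
    μ.H_submod W Z2 (fun ω => (X' ω, Z1 ω))
  have c7 : μ.H (fun ω => (W ω, Z2 ω, (X' ω, Z1 ω)))
      = μ.H (fun ω => (W ω, (X' ω, (Z1 ω, Z2 ω)))) :=
    μ.H_congr _ _ (fun p => (p.1, (p.2.2.1, (p.2.2.2, p.2.1))))
      (fun p => (p.1, (p.2.2.2, (p.2.1, p.2.2.1)))) (fun _ => rfl) (fun _ => rfl)
  have c8 : μ.H (fun ω => (Z2 ω, (X' ω, Z1 ω))) = μ.H (fun ω => (X' ω, (Z1 ω, Z2 ω))) :=
    μ.H_congr _ _ (fun p => (p.2.1, (p.2.2, p.1))) (fun p => (p.2.2, (p.1, p.2.1)))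
      (fun _ => rfl) (fun _ => rfl)
  have m9c : μ.H (fun ω => (W ω, (X' ω, Z2 ω)))
      ≤ μ.H (fun ω => (W ω, (X' ω, (Z1 ω, Z2 ω)))) :=
    μ.H_comp_le (fun p : SW × (SX' × (SZ1 × SZ2)) => (p.1, (p.2.1, p.2.2.2)))
      (fun ω => (W ω, (X' ω, (Z1 ω, Z2 ω))))
  have s9e : μ.H (fun ω => (Z1 ω, X' ω, Z2 ω)) + μ.H Z2
      ≤ μ.H (fun ω => (Z1 ω, Z2 ω)) + μ.H (fun ω => (X' ω, Z2 ω)) :=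
    μ.H_submod Z1 X' Z2
  have c9 : μ.H (fun ω => (Z1 ω, X' ω, Z2 ω)) = μ.H (fun ω => (X' ω, (Z1 ω, Z2 ω))) :=
    μ.H_congr _ _ (fun p => (p.2.1, (p.1, p.2.2))) (fun p => (p.2.1, (p.1, p.2.2)))
      (fun _ => rfl) (fun _ => rfl)
  linarith
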